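/- Quantitative bound in the probabilistic regularity lemma: In the setting of the probabilistic Szemerédi regularity lemma (ε > 0, m ≥ 0, F : ℝ⁺ → ℝ⁺ monotone increasing, I a finite index set, (Ω, B_max, P) a probability space with sub-σ-algebras (B_{i,max})_{i∈I}, and X ∈ L²(B_max) with ‖X‖_{L²} ≤ 1), the bound M₀ on the quantity M may be taken to be the value obtained by applying ⌊1/ε²⌋ iterations of the map M ↦ M + F(M)²/ε² + 1 to the initial value m. That is, there exist finite sub-σ-algebras B_i ⊆ B'_i ⊆ B_{i,max} and a real M with m ≤ M ≤ G^{(⌊1/ε²⌋)}(m), where G(x) := x + F(x)²/ε² + 1, such that complex(B_i) ≤ M for all i ∈ I, ‖E(X | ⋁_{i∈I} B'_i) − E(X | ⋁_{i∈I} B_i)‖_{L²} ≤ ε, and for all events A_i ∈ B_{i,max} (i ∈ I), |E( (X − E(X | ⋁_{i∈I} B'_i)) ∏_{i∈I} 1_{A_i} )| ≤ 1/F(M). -/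

import Mathlib

/-!
Energy increment. For finite families `S i` of `Bmax i`-measurable sets, the energy
`‖μ[X|σ(S)]‖₂²` is at most `‖X‖₂² ≤ 1`, and by Pythagoras refining `S` to `S'` raises it by
`‖μ[X|σ(S')] - μ[X|σ(S)]‖₂²`. If `X - μ[X|σ(S)]` correlates by more than `τ` with some
`∏ i, 1_{A i}`, adding each `A i` to `S i` raises the energy by more than `τ²`; hence at most
`⌊F(M)²⌋ + 1` such additions make `X - μ[X|σ(S')]` `1/F(M)`-pseudorandom. If then still
`‖μ[X|σ(S')] - μ[X|σ(S)]‖₂ > ε`, restart from `S'` with `M + F(M)²/ε² + 1` in place of `M`;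
each restart raises the energy by `ε²`, so there are at most `⌊1/ε²⌋` of them.
-/

open MeasureTheory

/-- The complexity of a σ-algebra: the least number of sets needed to generate it. -/
noncomputable def complexity {Ω : Type*} (m : MeasurableSpace Ω) : ℕ :=
  sInf {n : ℕ | ∃ S : Finset (Set Ω), S.card = n ∧ MeasurableSpace.generateFrom (↑S) = m}

theorem Submodule.norm_starProjection_sq_eq_add_of_le {𝕜 E : Type*} [RCLike 𝕜]
    [NormedAddCommGroup E] [InnerProductSpace 𝕜 E] {U V : Submodule 𝕜 E}
    [U.HasOrthogonalProjection] [V.HasOrthogonalProjection] (h : U ≤ V) (x : E) :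
    ‖V.starProjection x‖ ^ 2
      = ‖U.starProjection x‖ ^ 2 + ‖V.starProjection x - U.starProjection x‖ ^ 2 := by
  have hUV : U.starProjection (V.starProjection x) = U.starProjection x :=
    congr($(starProjection_comp_starProjection_of_le h) x)
  have := U.norm_sq_eq_add_norm_sq_starProjection (V.starProjection x)
  rwa [starProjection_orthogonal, sub_apply, hUV] at this

theorem MeasurableSpace.finite_measurableSet_generateFrom {Ω : Type*} {S : Set (Set Ω)}
    (hS : S.Finite) : {s : Set Ω | MeasurableSet[generateFrom S] s}.Finite := by
  have := hS.to_subtype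
  let φ : Ω → S → Prop := fun x s => x ∈ (s : Set Ω)
  have hle : generateFrom S ≤ MeasurableSpace.comap φ ⊤ :=
    generateFrom_le fun s hs => ⟨{p | p ⟨s, hs⟩}, trivial, rfl⟩
  refine (Set.finite_range fun T : Set (S → Prop) => φ ⁻¹' T).subset fun s hs => ?_
  obtain ⟨T, -, rfl⟩ := hle s hs
  exact ⟨T, rfl⟩

theorem complexity_generateFrom_le_card {Ω : Type*} (S : Finset (Set Ω)) :
    complexity (MeasurableSpace.generateFrom (S : Set (Set Ω))) ≤ S.card :=
  Nat.sInf_le ⟨S, rfl, rfl⟩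

theorem exists_lt_iterate_of_energy_increment {α : Type*} {f : α → α} {e : α → ℝ}
    {P Q : α → Prop} {c δ : ℝ} (hQ : ∀ a, Q a → ¬ P a → Q (f a)) (he : ∀ a, Q a → e a ≤ c)
    (hinc : ∀ a, Q a → ¬ P a → e a + δ ≤ e (f a)) {n : ℕ} {a : α} (ha : Q a)
    (hn : c < e a + n * δ) : ∃ k < n, Q (f^[k] a) ∧ P (f^[k] a) := by
  induction n generalizing a with
  | zero => simp at hn; linarith [he a ha]
  | succ n ih =>
    by_cases hPa : P a
    · exact ⟨0, n.succ_pos, ha, hPa⟩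
    obtain ⟨k, hk, hkQ⟩ := ih (hQ a ha hPa) (by push_cast at hn; linarith [hinc a ha hPa])
    exact ⟨k + 1, by omega, hkQ⟩

namespace MeasureTheory

variable {Ω : Type*} {m m' m₀ : MeasurableSpace Ω} {μ : Measure Ω} {X : Ω → ℝ}

theorem lpMeas_mono {𝕜 E : Type*} [RCLike 𝕜] [NormedAddCommGroup E] [NormedSpace 𝕜 E]
    {p : ENNReal} (h : m ≤ m') : lpMeas E 𝕜 m p μ ≤ lpMeas E 𝕜 m' p μ := fun _ hf =>
  mem_lpMeas_iff_aestronglyMeasurable.mpr ((mem_lpMeas_iff_aestronglyMeasurable.mp hf).mono h)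

theorem lpNorm_eq_norm_of_ae_eq {E : Type*} [NormedAddCommGroup E] {p : ENNReal} {g : Ω → E}
    {f : Lp E p μ} (h : g =ᵐ[μ] f) : lpNorm g p μ = ‖f‖ := by
  rw [← toReal_eLpNorm ((Lp.aestronglyMeasurable f).congr h.symm), eLpNorm_congr_ae h,
    Lp.norm_def]

theorem lpNorm_one_le_lpNorm_two [IsProbabilityMeasure μ] {f : Ω → ℝ} (hf : MemLp f 2 μ) :
    lpNorm f 1 μ ≤ lpNorm f 2 μ := by
  have := eLpNorm_le_eLpNorm_of_exponent_le one_le_two hf.1 (μ := μ)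
  rwa [← ofReal_lpNorm (hf.mono_exponent one_le_two), ← ofReal_lpNorm hf,
    ENNReal.ofReal_le_ofReal_iff lpNorm_nonneg] at this

/-- Pythagoras: `μ[X|m]` is the orthogonal projection of `μ[X|m']` onto `L²(m)`. -/
theorem lpNorm_condExp_sq_eq_add [IsFiniteMeasure μ] (hmm' : m ≤ m') (hm' : m' ≤ m₀)
    (hX : MemLp X 2 μ) :
    lpNorm μ[X|m'] 2 μ ^ 2 = lpNorm μ[X|m] 2 μ ^ 2 + lpNorm (μ[X|m'] - μ[X|m]) 2 μ ^ 2 := by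
  have hm := hmm'.trans hm'
  have : Fact (m ≤ m₀) := ⟨hm⟩
  have : Fact (m' ≤ m₀) := ⟨hm'⟩
  have hK : lpMeas ℝ ℝ m 2 μ ≤ lpMeas ℝ ℝ m' 2 μ := lpMeas_mono hmm'
  have h : ⇑((lpMeas ℝ ℝ m 2 μ).starProjection (hX.toLp X)) =ᵐ[μ] μ[X|m] :=
    hX.condExpL2_ae_eq_condExp hm
  have h' : ⇑((lpMeas ℝ ℝ m' 2 μ).starProjection (hX.toLp X)) =ᵐ[μ] μ[X|m'] :=
    hX.condExpL2_ae_eq_condExp hm'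
  rw [lpNorm_eq_norm_of_ae_eq h.symm, lpNorm_eq_norm_of_ae_eq h'.symm,
    lpNorm_eq_norm_of_ae_eq ((h'.sub h).symm.trans (Lp.coeFn_sub _ _).symm)]
  exact Submodule.norm_starProjection_sq_eq_add_of_le hK _

theorem lpNorm_condExp_sq_add_sq_le [IsFiniteMeasure μ] (hmm' : m ≤ m') (hm' : m' ≤ m₀)
    (hX : MemLp X 2 μ) {δ : ℝ} (hδ : 0 ≤ δ) (h : δ ≤ lpNorm (μ[X|m'] - μ[X|m]) 2 μ) :
    lpNorm μ[X|m] 2 μ ^ 2 + δ ^ 2 ≤ lpNorm μ[X|m'] 2 μ ^ 2 := by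
  rw [lpNorm_condExp_sq_eq_add hmm' hm' hX]
  gcongr

theorem lpNorm_condExp_sq_le [IsFiniteMeasure μ] (hX : MemLp X 2 μ) :
    lpNorm μ[X|m] 2 μ ^ 2 ≤ lpNorm X 2 μ ^ 2 := by
  gcongr
  · exact lpNorm_nonneg
  exact hX.lpNorm_condExp_le_lpNorm one_le_two

theorem abs_setIntegral_sub_condExp_le_lpNorm [IsProbabilityMeasure μ] (hm' : m' ≤ m₀)
    (hX : MemLp X 2 μ) {T : Set Ω} (hT : MeasurableSet[m'] T) :
    |∫ x in T, X x - μ[X|m] x ∂μ| ≤ lpNorm (μ[X|m'] - μ[X|m]) 2 μ := by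
  have hXi := hX.integrable one_le_two
  have hD : MemLp (μ[X|m'] - μ[X|m]) 2 μ :=
    (hX.condExp one_le_two).sub (hX.condExp one_le_two)
  calc |∫ x in T, X x - μ[X|m] x ∂μ|
      = |∫ x in T, (μ[X|m'] - μ[X|m]) x ∂μ| := by
        rw [integral_sub hXi.integrableOn integrable_condExp.integrableOn,
          ← setIntegral_condExp hm' hXi hT, Pi.sub_def,
          integral_sub integrable_condExp.integrableOn integrable_condExp.integrableOn]
    _ ≤ ∫ x, ‖(μ[X|m'] - μ[X|m]) x‖ ∂μ :=
        (norm_integral_le_integral_norm _).trans <|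
          setIntegral_le_integral (hD.integrable one_le_two).norm
            (.of_forall fun _ => norm_nonneg _)
    _ = lpNorm (μ[X|m'] - μ[X|m]) 1 μ := (lpNorm_one_eq_integral_norm hD.1).symm
    _ ≤ lpNorm (μ[X|m'] - μ[X|m]) 2 μ := lpNorm_one_le_lpNorm_two hD

theorem integral_mul_prod_indicator_one {I : Type*} [Fintype I] (Y : Ω → ℝ) {A : I → Set Ω}
    (hA : ∀ i, MeasurableSet[m₀] (A i)) :
    ∫ x, Y x * ∏ i, (A i).indicator 1 x ∂μ = ∫ x in ⋂ i, A i, Y x ∂μ := by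
  simp_rw [prod_indicator_const_apply, one_pow, Finset.mem_univ, Set.iInter_true,
    ← Set.indicator_mul_right, Pi.one_apply, mul_one]
  exact integral_indicator (.iInter hA)

end MeasureTheory

section Regularity

variable {I Ω : Type*} {mΩ : MeasurableSpace Ω} {μ : Measure Ω} {X : Ω → ℝ}
  {Bmax : I → MeasurableSpace Ω} {τ ε : ℝ} {F : ℝ → ℝ}

abbrev iSupGenerateFrom (S : I → Finset (Set Ω)) : MeasurableSpace Ω :=
  ⨆ i, MeasurableSpace.generateFrom (S i : Set (Set Ω))

theorem iSupGenerateFrom_mono {S S' : I → Finset (Set Ω)} (h : S ≤ S') :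
    iSupGenerateFrom S ≤ iSupGenerateFrom S' :=
  iSup_mono fun i => MeasurableSpace.generateFrom_mono (Finset.coe_subset.mpr (h i))

theorem iSupGenerateFrom_le (hBmax : ∀ i, Bmax i ≤ mΩ) {S : I → Finset (Set Ω)}
    (hS : ∀ i, MeasurableSpace.generateFrom (S i : Set (Set Ω)) ≤ Bmax i) :
    iSupGenerateFrom S ≤ mΩ :=
  iSup_le fun i => (hS i).trans (hBmax i)

variable [Fintype I]

def IsPseudorandom (μ : Measure Ω) (Bmax : I → MeasurableSpace Ω) (Y : Ω → ℝ) (τ : ℝ) : Prop :=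
  ∀ A : I → Set Ω, (∀ i, MeasurableSet[Bmax i] (A i)) →
    |∫ x, Y x * ∏ i, (A i).indicator 1 x ∂μ| ≤ τ

theorem not_isPseudorandom_iff {Y : Ω → ℝ} :
    ¬ IsPseudorandom μ Bmax Y τ ↔ ∃ A : I → Set Ω, (∀ i, MeasurableSet[Bmax i] (A i)) ∧
      τ < |∫ x, Y x * ∏ i, (A i).indicator 1 x ∂μ| := by
  simp [IsPseudorandom]

noncomputable def refineStep (μ : Measure Ω) (X : Ω → ℝ) (Bmax : I → MeasurableSpace Ω)
    (τ : ℝ) (S : I → Finset (Set Ω)) : I → Finset (Set Ω) :=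
  open Classical in
  if h : IsPseudorandom μ Bmax (X - μ[X|iSupGenerateFrom S]) τ then S
  else fun i => insert ((not_isPseudorandom_iff.mp h).choose i) (S i)

theorem refineStep_of_isPseudorandom {S : I → Finset (Set Ω)}
    (h : IsPseudorandom μ Bmax (X - μ[X|iSupGenerateFrom S]) τ) :
    refineStep μ X Bmax τ S = S :=
  dif_pos h

theorem le_refineStep (S : I → Finset (Set Ω)) : S ≤ refineStep μ X Bmax τ S := by
  unfold refineStep
  split_ifs
  exacts [le_rfl, fun i => Finset.subset_insert _ _]

theorem card_refineStep_le (S : I → Finset (Set Ω)) (i : I) :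
    (refineStep μ X Bmax τ S i).card ≤ (S i).card + 1 := by
  unfold refineStep
  split_ifs
  exacts [Nat.le_succ _, Finset.card_insert_le _ _]

theorem generateFrom_refineStep_le {S : I → Finset (Set Ω)}
    (hS : ∀ i, MeasurableSpace.generateFrom (S i : Set (Set Ω)) ≤ Bmax i) (i : I) :
    MeasurableSpace.generateFrom (refineStep μ X Bmax τ S i : Set (Set Ω)) ≤ Bmax i := by
  unfold refineStep
  split_ifs with h
  · exact hS i
  · refine MeasurableSpace.generateFrom_le fun t ht => ?_
    rcases Finset.mem_insert.mp ht with rfl | ht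
    · exact (not_isPseudorandom_iff.mp h).choose_spec.1 i
    · exact hS i t (.basic t ht)

theorem lpNorm_condExp_sq_add_sq_le_refineStep [IsProbabilityMeasure μ]
    (hBmax : ∀ i, Bmax i ≤ mΩ) (hX : MemLp X 2 μ) {S : I → Finset (Set Ω)}
    (hS : ∀ i, MeasurableSpace.generateFrom (S i : Set (Set Ω)) ≤ Bmax i) (hτ : 0 ≤ τ)
    (h : ¬ IsPseudorandom μ Bmax (X - μ[X|iSupGenerateFrom S]) τ) :
    lpNorm μ[X|iSupGenerateFrom S] 2 μ ^ 2 + τ ^ 2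
      ≤ lpNorm μ[X|iSupGenerateFrom (refineStep μ X Bmax τ S)] 2 μ ^ 2 := by
  obtain ⟨hA, hlt⟩ := (not_isPseudorandom_iff.mp h).choose_spec
  set A := (not_isPseudorandom_iff.mp h).choose
  have hS' : refineStep μ X Bmax τ S = fun i => insert (A i) (S i) := dif_neg h
  have hT : MeasurableSet[iSupGenerateFrom (refineStep μ X Bmax τ S)] (⋂ i, A i) :=
    .iInter fun i => le_iSup (fun i => MeasurableSpace.generateFrom _) i _ <|
      .basic _ (by simp [hS'])
  rw [integral_mul_prod_indicator_one _ fun i => hBmax i _ (hA i)] at hlt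
  exact lpNorm_condExp_sq_add_sq_le (iSupGenerateFrom_mono (le_refineStep S))
    (iSupGenerateFrom_le hBmax (generateFrom_refineStep_le hS)) hX hτ
    (hlt.le.trans (abs_setIntegral_sub_condExp_le_lpNorm
      (iSupGenerateFrom_le hBmax (generateFrom_refineStep_le hS)) hX hT))

theorem le_iterate_refineStep (n : ℕ) (S : I → Finset (Set Ω)) :
    S ≤ (refineStep μ X Bmax τ)^[n] S :=
  Function.id_le_iterate_of_id_le le_refineStep n S

theorem card_iterate_refineStep_le (n : ℕ) (S : I → Finset (Set Ω)) (i : I) :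
    ((refineStep μ X Bmax τ)^[n] S i).card ≤ (S i).card + n := by
  induction n generalizing S with
  | zero => rfl
  | succ n ih =>
    rw [Function.iterate_succ_apply]
    have := card_refineStep_le (μ := μ) (X := X) (Bmax := Bmax) (τ := τ) S i
    exact (ih _).trans (by omega)

theorem generateFrom_iterate_refineStep_le {S : I → Finset (Set Ω)}
    (hS : ∀ i, MeasurableSpace.generateFrom (S i : Set (Set Ω)) ≤ Bmax i) (n : ℕ) (i : I) :
    MeasurableSpace.generateFrom ((refineStep μ X Bmax τ)^[n] S i : Set (Set Ω)) ≤ Bmax i :=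
  Function.Iterate.rec
    (fun S : I → Finset (Set Ω) => ∀ i, MeasurableSpace.generateFrom (S i : Set (Set Ω)) ≤ Bmax i)
    hS (fun _ => generateFrom_refineStep_le) n i

/-- `refineStep` is stationary at a pseudorandom `S`, so it suffices that some iterate before the
`n`-th is pseudorandom. -/
theorem isPseudorandom_iterate_refineStep [IsProbabilityMeasure μ] (hBmax : ∀ i, Bmax i ≤ mΩ)
    (hX : MemLp X 2 μ) {S : I → Finset (Set Ω)}
    (hS : ∀ i, MeasurableSpace.generateFrom (S i : Set (Set Ω)) ≤ Bmax i) (hτ : 0 ≤ τ) {n : ℕ}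
    (hn : lpNorm X 2 μ ^ 2 < n * τ ^ 2) :
    IsPseudorandom μ Bmax (X - μ[X|iSupGenerateFrom ((refineStep μ X Bmax τ)^[n] S)]) τ := by
  obtain ⟨k, hk, -, hP⟩ := exists_lt_iterate_of_energy_increment
    (f := refineStep μ X Bmax τ) (e := fun S => lpNorm μ[X|iSupGenerateFrom S] 2 μ ^ 2)
    (P := fun S => IsPseudorandom μ Bmax (X - μ[X|iSupGenerateFrom S]) τ)
    (Q := fun S : I → Finset (Set Ω) =>
      ∀ i, MeasurableSpace.generateFrom (S i : Set (Set Ω)) ≤ Bmax i)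
    (fun _ hS _ => generateFrom_refineStep_le hS) (fun _ _ => lpNorm_condExp_sq_le hX)
    (fun _ hS h => lpNorm_condExp_sq_add_sq_le_refineStep hBmax hX hS hτ h) hS
    (hn.trans_le (le_add_of_nonneg_left (by positivity)))
  rwa [← Nat.sub_add_cancel hk.le, Function.iterate_add_apply,
    Function.iterate_fixed (refineStep_of_isPseudorandom hP)]

/-- `p.2` is the current bound `M` on the number of generators. -/
noncomputable def regularityStep (μ : Measure Ω) (X : Ω → ℝ) (Bmax : I → MeasurableSpace Ω)
    (ε : ℝ) (F : ℝ → ℝ) (p : (I → Finset (Set Ω)) × ℝ) : (I → Finset (Set Ω)) × ℝ :=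
  ((refineStep μ X Bmax (1 / F p.2))^[⌊F p.2 ^ 2⌋₊ + 1] p.1, p.2 + F p.2 ^ 2 / ε ^ 2 + 1)

theorem le_regularityStep_fst (p : (I → Finset (Set Ω)) × ℝ) :
    p.1 ≤ (regularityStep μ X Bmax ε F p).1 :=
  le_iterate_refineStep _ _

theorem generateFrom_regularityStep_fst_le {p : (I → Finset (Set Ω)) × ℝ}
    (hS : ∀ i, MeasurableSpace.generateFrom (p.1 i : Set (Set Ω)) ≤ Bmax i) (i : I) :
    MeasurableSpace.generateFrom ((regularityStep μ X Bmax ε F p).1 i : Set (Set Ω)) ≤ Bmax i :=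
  generateFrom_iterate_refineStep_le hS _ i

theorem snd_iterate_regularityStep (k : ℕ) (p : (I → Finset (Set Ω)) × ℝ) :
    ((regularityStep μ X Bmax ε F)^[k] p).2 = (fun x => x + F x ^ 2 / ε ^ 2 + 1)^[k] p.2 :=
  Function.Semiconj.iterate_right (f := Prod.snd) (fun _ => rfl) k p

theorem isPseudorandom_regularityStep [IsProbabilityMeasure μ] (hBmax : ∀ i, Bmax i ≤ mΩ)
    (hX : MemLp X 2 μ) (hX1 : lpNorm X 2 μ ≤ 1) (hF : ∀ x, 0 < F x)
    {p : (I → Finset (Set Ω)) × ℝ}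
    (hS : ∀ i, MeasurableSpace.generateFrom (p.1 i : Set (Set Ω)) ≤ Bmax i) :
    IsPseudorandom μ Bmax (X - μ[X|iSupGenerateFrom (regularityStep μ X Bmax ε F p).1])
      (1 / F p.2) := by
  refine isPseudorandom_iterate_refineStep hBmax hX hS (by have := hF p.2; positivity) ?_
  have hF2 : 0 < F p.2 ^ 2 := by have := hF p.2; positivity
  have hfloor := Nat.lt_floor_add_one (F p.2 ^ 2)
  rw [div_pow, one_pow, mul_one_div, lt_div_iff₀ hF2]
  push_cast
  nlinarith [pow_le_one₀ (n := 2) lpNorm_nonneg hX1]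

theorem lpNorm_condExp_sq_add_sq_le_regularityStep [IsProbabilityMeasure μ]
    (hBmax : ∀ i, Bmax i ≤ mΩ) (hX : MemLp X 2 μ) (hε : 0 ≤ ε) {p : (I → Finset (Set Ω)) × ℝ}
    (hS : ∀ i, MeasurableSpace.generateFrom (p.1 i : Set (Set Ω)) ≤ Bmax i)
    (hgap : ε ≤ lpNorm (μ[X|iSupGenerateFrom (regularityStep μ X Bmax ε F p).1]
      - μ[X|iSupGenerateFrom p.1]) 2 μ) :
    lpNorm μ[X|iSupGenerateFrom p.1] 2 μ ^ 2 + ε ^ 2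
      ≤ lpNorm μ[X|iSupGenerateFrom (regularityStep μ X Bmax ε F p).1] 2 μ ^ 2 :=
  lpNorm_condExp_sq_add_sq_le (iSupGenerateFrom_mono (le_regularityStep_fst p))
    (iSupGenerateFrom_le hBmax (generateFrom_regularityStep_fst_le hS)) hX hε hgap

/-- A failed round forces `ε < 1`, which is what makes `F(M)²/ε² + 1` pay for the
`⌊F(M)²⌋ + 1` new generators. -/
theorem card_regularityStep_le [IsProbabilityMeasure μ] (hBmax : ∀ i, Bmax i ≤ mΩ)
    (hX : MemLp X 2 μ) (hX1 : lpNorm X 2 μ ≤ 1) (hε : 0 < ε) {p : (I → Finset (Set Ω)) × ℝ}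
    (hS : ∀ i, MeasurableSpace.generateFrom (p.1 i : Set (Set Ω)) ≤ Bmax i)
    (hcard : ∀ i, ((p.1 i).card : ℝ) ≤ p.2)
    (hgap : ε < lpNorm (μ[X|iSupGenerateFrom (regularityStep μ X Bmax ε F p).1]
      - μ[X|iSupGenerateFrom p.1]) 2 μ) (i : I) :
    (((regularityStep μ X Bmax ε F p).1 i).card : ℝ) ≤ (regularityStep μ X Bmax ε F p).2 := by
  set S' := (regularityStep μ X Bmax ε F p).1
  have hε1 : ε < 1 := by
    have hSS' : p.1 ≤ S' := le_regularityStep_fst p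
    have hS' : iSupGenerateFrom S' ≤ mΩ :=
      iSupGenerateFrom_le hBmax (generateFrom_regularityStep_fst_le hS)
    have hpyth := lpNorm_condExp_sq_eq_add (iSupGenerateFrom_mono hSS') hS' hX
    have henergy := (lpNorm_condExp_sq_le (m := iSupGenerateFrom S') hX).trans
      (pow_le_one₀ lpNorm_nonneg hX1)
    nlinarith [lpNorm_nonneg (f := μ[X|iSupGenerateFrom p.1]) (p := 2) (μ := μ)]
  have hF2 : F p.2 ^ 2 ≤ F p.2 ^ 2 / ε ^ 2 := by
    rw [le_div_iff₀ (by positivity)]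
    exact mul_le_of_le_one_right (sq_nonneg _) (pow_le_one₀ hε.le hε1.le)
  calc ((S' i).card : ℝ)
      ≤ (p.1 i).card + (⌊F p.2 ^ 2⌋₊ + 1 : ℕ) := by
        exact_mod_cast card_iterate_refineStep_le _ _ i
    _ ≤ p.2 + F p.2 ^ 2 / ε ^ 2 + 1 := by
        have := Nat.floor_le (sq_nonneg (F p.2))
        push_cast
        linarith [hcard i]

theorem exists_lpNorm_condExp_regularityStep_sub_le [IsProbabilityMeasure μ]
    (hBmax : ∀ i, Bmax i ≤ mΩ) (hX : MemLp X 2 μ) (hX1 : lpNorm X 2 μ ≤ 1) (hε : 0 < ε)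
    {m : ℝ} (hm : 0 ≤ m) :
    ∃ p : (I → Finset (Set Ω)) × ℝ,
      m ≤ p.2 ∧ p.2 ≤ (fun x : ℝ => x + F x ^ 2 / ε ^ 2 + 1)^[⌊1 / ε ^ 2⌋₊] m ∧
      (∀ i, MeasurableSpace.generateFrom (p.1 i : Set (Set Ω)) ≤ Bmax i) ∧
      (∀ i, ((p.1 i).card : ℝ) ≤ p.2) ∧
      lpNorm (μ[X|iSupGenerateFrom (regularityStep μ X Bmax ε F p).1]
        - μ[X|iSupGenerateFrom p.1]) 2 μ ≤ ε := by
  obtain ⟨k, hk, ⟨hS, hcard⟩, hgap⟩ := exists_lt_iterate_of_energy_increment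
    (f := regularityStep μ X Bmax ε F) (e := fun p => lpNorm μ[X|iSupGenerateFrom p.1] 2 μ ^ 2)
    (P := fun p => lpNorm (μ[X|iSupGenerateFrom (regularityStep μ X Bmax ε F p).1]
      - μ[X|iSupGenerateFrom p.1]) 2 μ ≤ ε)
    (Q := fun p => (∀ i, MeasurableSpace.generateFrom (p.1 i : Set (Set Ω)) ≤ Bmax i) ∧
      ∀ i, ((p.1 i).card : ℝ) ≤ p.2)
    (fun _ hp hP => ⟨generateFrom_regularityStep_fst_le hp.1,
      card_regularityStep_le hBmax hX hX1 hε hp.1 hp.2 (not_le.mp hP)⟩)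
    (fun _ _ => (lpNorm_condExp_sq_le hX).trans (pow_le_one₀ lpNorm_nonneg hX1))
    (fun _ hp hP => lpNorm_condExp_sq_add_sq_le_regularityStep hBmax hX hε.le hp.1
      (not_le.mp hP).le)
    (a := (fun _ => ∅, m)) (n := ⌊1 / ε ^ 2⌋₊ + 1) ⟨fun _ => by simp, fun _ => by simpa using hm⟩
    (by
      have h1 := (div_lt_iff₀ (by positivity)).mp (Nat.lt_floor_add_one (1 / ε ^ 2))
      push_cast
      exact h1.trans_le (le_add_of_nonneg_left (by positivity)))
  have hG : id ≤ fun x : ℝ => x + F x ^ 2 / ε ^ 2 + 1 := fun x => by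
    dsimp only [id]; linarith [div_nonneg (sq_nonneg (F x)) (sq_nonneg ε)]
  refine ⟨_, ?_, ?_, hS, hcard, hgap⟩ <;> rw [snd_iterate_regularityStep]
  exacts [Function.id_le_iterate_of_id_le hG k m,
    Function.monotone_iterate_of_id_le hG (Nat.lt_succ_iff.mp hk) m]

end Regularity

theorem szemeredi_regularity_probabilistic_quantitative_general
    (ε : ℝ) (hε : 0 < ε) (m : ℝ) (hm : 0 ≤ m)
    (F : ℝ → ℝ) (hFpos : ∀ x, 0 < F x)
    (I : Type) [Fintype I]
    (Ω : Type) [mΩ : MeasurableSpace Ω] (μ : Measure Ω) [IsProbabilityMeasure μ]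
    (Bmax : I → MeasurableSpace Ω) (hBmax : ∀ i, Bmax i ≤ mΩ)
    (X : Ω → ℝ) (hX : MemLp X 2 μ) (hXnorm : eLpNorm X 2 μ ≤ 1) :
    ∃ (B B' : I → MeasurableSpace Ω) (M : ℝ),
      -- B_i ⊆ B'_i ⊆ B_{i,max}, all finite σ-algebras
      (∀ i, B i ≤ B' i) ∧
      (∀ i, B' i ≤ Bmax i) ∧
      (∀ i, {s : Set Ω | MeasurableSet[B i] s}.Finite) ∧
      (∀ i, {s : Set Ω | MeasurableSet[B' i] s}.Finite) ∧
      -- size of M: m ≤ M ≤ G^(⌊1/ε²⌋)(m) with G(x) = x + F(x)²/ε² + 1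
      m ≤ M ∧
      M ≤ (fun x : ℝ => x + F x ^ 2 / ε ^ 2 + 1)^[⌊1 / ε ^ 2⌋₊] m ∧
      -- complexity bound
      (∀ i, (complexity (B i) : ℝ) ≤ M) ∧
      -- coarse and fine approximations are close
      eLpNorm (μ[X| ⨆ i, B' i] - μ[X| ⨆ i, B i]) 2 μ ≤ ENNReal.ofReal ε ∧
      -- fine approximation is extremely accurate
      (∀ A : I → Set Ω, (∀ i, MeasurableSet[Bmax i] (A i)) →
        |∫ x, (X x - (μ[X| ⨆ i, B' i]) x) * ∏ i, (A i).indicator (1 : Ω → ℝ) x ∂μ|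
          ≤ 1 / F M) := by
  have hX1 : lpNorm X 2 μ ≤ 1 := by rwa [← ofReal_lpNorm hX, ENNReal.ofReal_le_one] at hXnorm
  obtain ⟨p, hmM, hMG, hS, hcard, hgap⟩ :=
    exists_lpNorm_condExp_regularityStep_sub_le (F := F) hBmax hX hX1 hε hm
  set S' := (regularityStep μ X Bmax ε F p).1
  refine ⟨fun i => .generateFrom (p.1 i), fun i => .generateFrom (S' i), p.2,
    fun i => MeasurableSpace.generateFrom_mono (le_regularityStep_fst p i),
    generateFrom_regularityStep_fst_le hS,
    fun i => MeasurableSpace.finite_measurableSet_generateFrom (Finset.finite_toSet _),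
    fun i => MeasurableSpace.finite_measurableSet_generateFrom (Finset.finite_toSet _), hmM, hMG,
    fun i => (Nat.cast_le.mpr (complexity_generateFrom_le_card _)).trans (hcard i),
    ?_, isPseudorandom_regularityStep hBmax hX hX1 hFpos hS⟩
  rw [← ofReal_lpNorm ((hX.condExp one_le_two).sub (hX.condExp one_le_two))]
  exact ENNReal.ofReal_le_ofReal hgap

/-- Quantitative bound in the probabilistic Szemerédi regularity lemma: the bound `M₀`
may be taken to be `⌊1/ε²⌋` iterations of the map `G : x ↦ x + F(x)²/ε² + 1` applied
to the initial value `m`. -/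
theorem szemeredi_regularity_probabilistic_quantitative
    (ε : ℝ) (hε : 0 < ε) (m : ℝ) (hm : 0 ≤ m)
    (F : ℝ → ℝ) (hF : Monotone F) (hFpos : ∀ x, 0 < F x)
    (I : Type) [Fintype I]
    (Ω : Type) [mΩ : MeasurableSpace Ω] (μ : Measure Ω) [IsProbabilityMeasure μ]
    (Bmax : I → MeasurableSpace Ω) (hBmax : ∀ i, Bmax i ≤ mΩ)
    (X : Ω → ℝ) (hX : MemLp X 2 μ) (hXnorm : eLpNorm X 2 μ ≤ 1) :
    ∃ (B B' : I → MeasurableSpace Ω) (M : ℝ),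
      -- B_i ⊆ B'_i ⊆ B_{i,max}, all finite σ-algebras
      (∀ i, B i ≤ B' i) ∧
      (∀ i, B' i ≤ Bmax i) ∧
      (∀ i, {s : Set Ω | MeasurableSet[B i] s}.Finite) ∧
      (∀ i, {s : Set Ω | MeasurableSet[B' i] s}.Finite) ∧
      -- size of M: m ≤ M ≤ G^(⌊1/ε²⌋)(m) with G(x) = x + F(x)²/ε² + 1
      m ≤ M ∧
      M ≤ (fun x : ℝ => x + F x ^ 2 / ε ^ 2 + 1)^[⌊1 / ε ^ 2⌋₊] m ∧
      -- complexity bound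
      (∀ i, (complexity (B i) : ℝ) ≤ M) ∧
      -- coarse and fine approximations are close
      eLpNorm (μ[X| ⨆ i, B' i] - μ[X| ⨆ i, B i]) 2 μ ≤ ENNReal.ofReal ε ∧
      -- fine approximation is extremely accurate
      (∀ A : I → Set Ω, (∀ i, MeasurableSet[Bmax i] (A i)) →
        |∫ x, (X x - (μ[X| ⨆ i, B' i]) x) * ∏ i, (A i).indicator (1 : Ω → ℝ) x ∂μ|
          ≤ 1 / F M) :=
  szemeredi_regularity_probabilistic_quantitative_general ε hε m hm F hFpos I Ω (mΩ := mΩ) μ Bmax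
    hBmax X hX hXnorm
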